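/- (Concentration inequality for subsample Rademacher complexity) Let n ∼ Binomial(m, 1−p) count the supervised samples among m joint samples. For δ ∈ (0,1) and m large enough that 1−p−√(log(1/δ)/(2m)) > 0, with probability at least 1−δ over n, R_n(F, D) ≤ R_m(F, D) / (1−p−√(log(1/δ)/(2m))). -/

import Mathlib

open scoped BigOperators
open MeasureTheory

/-- Sign of a Rademacher variable encoded as a Boolean. -/
noncomputable def rsign (b : Bool) : ℝ := if b then 1 else -1

/-- Empirical Rademacher complexity of a family `F` with respect to a sample. -/
noncomputable def empRad {X : Type*} (F : Set (X → ℝ)) (m : ℕ) (x : Fin m → X) : ℝ :=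
  (∑ η : Fin m → Bool,
    sSup {r : ℝ | ∃ f ∈ F, r = (1 / (m : ℝ)) * ∑ i, rsign (η i) * f (x i)}) / 2 ^ m

/-- Rademacher complexity of `F` over `m` i.i.d. samples drawn from `D`. -/
noncomputable def Rad {X : Type*} [MeasurableSpace X] (F : Set (X → ℝ)) (m : ℕ)
    (D : Measure X) : ℝ :=
  ∫ x : Fin m → X, empRad F m x ∂(Measure.pi fun _ : Fin m => D)

/-!
Adding a sample point can only increase `k R_k`: averaging the supremum over the sign of the
new point dominates the supremum without it. Hence `k R_k ≤ m R_m`, so `R_k ≤ R_m / c` as soon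
as `k ≥ c m` with `c = 1 - p - ε`, and the failure event lies in the lower binomial tail
`{n ≤ (1 - p - ε) m}`. The Chernoff bound at `t = 4ε`, with Hoeffding's lemma for the Bernoulli
moment generating function, bounds that tail by `exp (-2 ε² m) = δ`.
-/

open Finset Real

section Rademacher

variable {X : Type*} {F : Set (X → ℝ)} {C : ℝ}

lemma abs_rsign (b : Bool) : |rsign b| = 1 := by cases b <;> simp [rsign]

@[simp] lemma rsign_true : rsign true = 1 := by simp [rsign]

@[simp] lemma rsign_false : rsign false = -1 := by simp [rsign]

lemma rsign_not (b : Bool) : rsign (!b) = -rsign b := by cases b <;> simp [rsign]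

lemma sum_sum_rsign_mul_eq_zero {ι : Type*} [Fintype ι] [DecidableEq ι] (a : ι → ℝ) :
    ∑ η : ι → Bool, ∑ i, rsign (η i) * a i = 0 := by
  have hnot : Function.Involutive fun (η : ι → Bool) i => !η i :=
    fun η => funext fun i => Bool.not_not (η i)
  have h := Equiv.sum_comp (hnot.toPerm _) fun η => ∑ i, rsign (η i) * a i
  simp only [Function.Involutive.coe_toPerm, rsign_not, neg_mul, sum_neg_distrib] at h
  linarith

noncomputable def supCorr (F : Set (X → ℝ)) {m : ℕ} (x : Fin m → X) (η : Fin m → Bool) : ℝ :=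
  sSup {r : ℝ | ∃ f ∈ F, r = ∑ i, rsign (η i) * f (x i)}

lemma le_supCorr (hbdd : ∀ f ∈ F, ∀ x : X, |f x| ≤ C) {m : ℕ} (x : Fin m → X)
    (η : Fin m → Bool) {f : X → ℝ} (hf : f ∈ F) :
    ∑ i, rsign (η i) * f (x i) ≤ supCorr F x η := by
  refine le_csSup ⟨∑ _i : Fin m, C, ?_⟩ ⟨f, hf, rfl⟩
  rintro r ⟨g, hg, rfl⟩
  refine sum_le_sum fun i _ => ?_
  calc rsign (η i) * g (x i) ≤ |rsign (η i) * g (x i)| := le_abs_self _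
    _ = |g (x i)| := by rw [abs_mul, abs_rsign, one_mul]
    _ ≤ C := hbdd g hg (x i)

lemma supCorr_le (hF : F.Nonempty) {m : ℕ} {x : Fin m → X} {η : Fin m → Bool} {a : ℝ}
    (h : ∀ f ∈ F, ∑ i, rsign (η i) * f (x i) ≤ a) : supCorr F x η ≤ a := by
  obtain ⟨f, hf⟩ := hF
  exact csSup_le ⟨_, f, hf, rfl⟩ fun r ⟨g, hg, hr⟩ => hr ▸ h g hg

lemma sum_supCorr_nonneg (hF : F.Nonempty) (hbdd : ∀ f ∈ F, ∀ x : X, |f x| ≤ C) {m : ℕ}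
    (x : Fin m → X) : 0 ≤ ∑ η, supCorr F x η := by
  obtain ⟨f, hf⟩ := hF
  calc 0 = ∑ η : Fin m → Bool, ∑ i, rsign (η i) * f (x i) := (sum_sum_rsign_mul_eq_zero _).symm
    _ ≤ ∑ η, supCorr F x η := sum_le_sum fun η _ => le_supCorr hbdd x η hf

lemma empRad_eq {m : ℕ} (x : Fin m → X) :
    empRad F m x = (m : ℝ)⁻¹ * (∑ η, supCorr F x η) / 2 ^ m := by
  rw [empRad, mul_sum]
  congr 2 with η
  rw [supCorr, ← smul_eq_mul, ← Real.sSup_smul_of_nonneg (by positivity)]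
  congr 1
  ext r
  simp [Set.mem_smul_set, eq_comm]

lemma two_mul_supCorr_tail_le (hF : F.Nonempty) (hbdd : ∀ f ∈ F, ∀ x : X, |f x| ≤ C) {m : ℕ}
    (x : Fin (m + 1) → X) (η : Fin m → Bool) :
    2 * supCorr F (x ∘ Fin.succ) η
      ≤ supCorr F x (Fin.cons true η) + supCorr F x (Fin.cons false η) := by
  rw [← le_div_iff₀' two_pos]
  refine supCorr_le hF fun f hf => ?_
  have htrue := le_supCorr hbdd x (Fin.cons true η) hf
  have hfalse := le_supCorr hbdd x (Fin.cons false η) hf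
  simp only [Fin.sum_univ_succ, Fin.cons_zero, Fin.cons_succ, rsign_true, rsign_false]
    at htrue hfalse
  simp only [Function.comp_apply]
  linarith

lemma two_mul_sum_supCorr_tail_le (hF : F.Nonempty) (hbdd : ∀ f ∈ F, ∀ x : X, |f x| ≤ C)
    {m : ℕ} (x : Fin (m + 1) → X) :
    2 * ∑ η, supCorr F (x ∘ Fin.succ) η ≤ ∑ η, supCorr F x η := by
  rw [← (Fin.consEquiv fun _ => Bool).sum_comp, Fintype.sum_prod_type, Fintype.sum_bool,
    ← sum_add_distrib, mul_sum]
  exact sum_le_sum fun η _ => two_mul_supCorr_tail_le hF hbdd x η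

lemma empRad_nonneg (hF : F.Nonempty) (hbdd : ∀ f ∈ F, ∀ x : X, |f x| ≤ C) (m : ℕ)
    (x : Fin m → X) : 0 ≤ empRad F m x := by
  rw [empRad_eq]
  have := sum_supCorr_nonneg hF hbdd x
  positivity

lemma mul_empRad_tail_le (hF : F.Nonempty) (hbdd : ∀ f ∈ F, ∀ x : X, |f x| ≤ C) {m : ℕ}
    (x : Fin (m + 1) → X) :
    m * empRad F m (x ∘ Fin.succ) ≤ (m + 1) * empRad F (m + 1) x := by
  have hnonneg := sum_supCorr_nonneg hF hbdd (x ∘ Fin.succ)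
  calc (m : ℝ) * empRad F m (x ∘ Fin.succ)
      = (m : ℝ) * (m : ℝ)⁻¹ * ((∑ η, supCorr F (x ∘ Fin.succ) η) / 2 ^ m) := by
        rw [empRad_eq]; ring
    _ ≤ (∑ η, supCorr F (x ∘ Fin.succ) η) / 2 ^ m :=
      mul_le_of_le_one_left (by positivity) mul_inv_le_one
    _ ≤ (∑ η, supCorr F x η) / 2 ^ (m + 1) := by
      rw [pow_succ', ← div_div, div_le_div_iff_of_pos_right (by positivity), le_div_iff₀' two_pos]
      exact two_mul_sum_supCorr_tail_le hF hbdd x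
    _ = (m + 1) * empRad F (m + 1) x := by
      rw [empRad_eq]; push_cast; field_simp

variable [MeasurableSpace X] {D : Measure X}

lemma measurePreserving_comp_succ (μ : Measure X) [IsProbabilityMeasure μ] (m : ℕ) :
    MeasurePreserving (fun x : Fin (m + 1) → X => x ∘ Fin.succ)
      (Measure.pi fun _ => μ) (Measure.pi fun _ => μ) :=
  measurePreserving_snd.comp (measurePreserving_piFinSuccAbove (fun _ => μ) 0)

lemma Rad_nonneg (hF : F.Nonempty) (hbdd : ∀ f ∈ F, ∀ x : X, |f x| ≤ C) (m : ℕ) :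
    0 ≤ Rad F m D :=
  integral_nonneg fun x => empRad_nonneg hF hbdd m x

variable [IsProbabilityMeasure D]

lemma mul_Rad_le_succ (hF : F.Nonempty) (hbdd : ∀ f ∈ F, ∀ x : X, |f x| ≤ C)
    (hmeas : ∀ k : ℕ, Integrable (empRad F k) (Measure.pi fun _ : Fin k => D)) (m : ℕ) :
    m * Rad F m D ≤ (m + 1) * Rad F (m + 1) D := by
  have hT := measurePreserving_comp_succ D m
  have htail : ∫ x, empRad F m (x ∘ Fin.succ) ∂(Measure.pi fun _ => D) = Rad F m D := by
    have hg := (hmeas m).aestronglyMeasurable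
    rw [← hT.map_eq] at hg
    rw [Rad, ← hT.map_eq, integral_map hT.aemeasurable hg]
  rw [← htail, Rad, ← integral_const_mul, ← integral_const_mul]
  refine integral_mono ?_ ((hmeas (m + 1)).const_mul _) (mul_empRad_tail_le hF hbdd)
  exact ((hT.integrable_comp (hmeas m).aestronglyMeasurable).2 (hmeas m)).const_mul _

lemma mul_Rad_mono (hF : F.Nonempty) (hbdd : ∀ f ∈ F, ∀ x : X, |f x| ≤ C)
    (hmeas : ∀ k : ℕ, Integrable (empRad F k) (Measure.pi fun _ : Fin k => D))
    {n m : ℕ} (h : n ≤ m) : n * Rad F n D ≤ m * Rad F m D := by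
  induction m, h using Nat.le_induction with
  | base => exact le_rfl
  | succ m _ ih => exact_mod_cast ih.trans (mul_Rad_le_succ hF hbdd hmeas m)

lemma Rad_le_div_of_mul_le (hF : F.Nonempty) (hbdd : ∀ f ∈ F, ∀ x : X, |f x| ≤ C)
    (hmeas : ∀ k : ℕ, Integrable (empRad F k) (Measure.pi fun _ : Fin k => D))
    {k m : ℕ} (hm : 0 < m) (hkm : k ≤ m) {c : ℝ} (hc : 0 < c) (hck : c * m ≤ k) :
    Rad F k D ≤ Rad F m D / c := by
  rw [le_div_iff₀ hc]
  refine le_of_mul_le_mul_left ?_ (Nat.cast_pos.2 hm : (0 : ℝ) < m)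
  calc (m : ℝ) * (Rad F k D * c) = c * m * Rad F k D := by ring
    _ ≤ k * Rad F k D := mul_le_mul_of_nonneg_right hck (Rad_nonneg hF hbdd k)
    _ ≤ m * Rad F m D := mul_Rad_mono hF hbdd hmeas hkm

end Rademacher

section Binomial

open ProbabilityTheory

/-- Hoeffding's lemma for a Bernoulli(`1 - p`) variable, at `-t`. -/
lemma one_sub_mul_exp_neg_add_le {p : ℝ} (hp0 : 0 ≤ p) (hp1 : p ≤ 1) (t : ℝ) :
    (1 - p) * exp (-t) + p ≤ exp (-((1 - p) * t) + t ^ 2 / 8) := by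
  have hq : 0 ≤ 1 - p := sub_nonneg.2 hp1
  let μ : Measure Bool :=
    ENNReal.ofReal (1 - p) • Measure.dirac true + ENNReal.ofReal p • Measure.dirac false
  have : IsProbabilityMeasure μ := ⟨by simp [μ, ← ENNReal.ofReal_add hq hp0]⟩
  have hμ (g : Bool → ℝ) : ∫ b, g b ∂μ = (1 - p) * g true + p * g false := by
    simp [integral_fintype Integrable.of_finite, μ, measureReal_def, hp0, hq]
  let Y : Bool → ℝ := fun b => if b then -p else 1 - p
  have hY (b : Bool) : Y b ∈ Set.Icc (-p) (1 - p) := by cases b <;> simp [Y]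
  have hmgf := (hasSubgaussianMGF_of_mem_Icc_of_integral_eq_zero
    (measurable_of_finite Y).aemeasurable (ae_of_all _ hY) (by rw [hμ]; simp [Y]; ring)).mgf_le t
  have hwidth : ‖1 - p - -p‖₊ = 1 := by simp
  simp only [mgf, hμ, Y, hwidth, if_true, Bool.false_eq_true, if_false] at hmgf
  calc (1 - p) * exp (-t) + p
      = (1 - p) * exp (-((1 - p) * t) + t * -p) + p * exp (-((1 - p) * t) + t * (1 - p)) := by
        rw [show -((1 - p) * t) + t * -p = -t by ring,
          show -((1 - p) * t) + t * (1 - p) = 0 by ring, exp_zero, mul_one]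
    _ = exp (-((1 - p) * t)) * ((1 - p) * exp (t * -p) + p * exp (t * (1 - p))) := by
        rw [exp_add, exp_add]; ring
    _ ≤ exp (-((1 - p) * t)) * exp (t ^ 2 / 8) := by
        refine mul_le_mul_of_nonneg_left (hmgf.trans_eq ?_) (exp_nonneg _)
        rw [exp_eq_exp]
        norm_num
        ring
    _ = exp (-((1 - p) * t) + t ^ 2 / 8) := (exp_add _ _).symm

lemma sum_choose_mul_pow_mul_exp (p : ℝ) (m : ℕ) (t : ℝ) :
    ∑ k ∈ range (m + 1), (m.choose k : ℝ) * (1 - p) ^ k * p ^ (m - k) * exp (-(t * k))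
      = ((1 - p) * exp (-t) + p) ^ m := by
  rw [add_pow]
  refine sum_congr rfl fun k _ => ?_
  rw [mul_pow, ← exp_nat_mul, mul_neg, mul_comm (k : ℝ) t]
  ring

lemma sum_choose_mul_pow (p : ℝ) (m : ℕ) :
    ∑ k ∈ range (m + 1), (m.choose k : ℝ) * (1 - p) ^ k * p ^ (m - k) = 1 := by
  simpa using sum_choose_mul_pow_mul_exp p m 0

lemma sum_filter_choose_mul_pow_le {p : ℝ} (hp0 : 0 ≤ p) (hp1 : p ≤ 1) (m : ℕ) {ε : ℝ}
    (hε : 0 ≤ ε) :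
    ∑ k ∈ (range (m + 1)).filter (fun k : ℕ => (k : ℝ) ≤ (1 - p - ε) * m),
      (m.choose k : ℝ) * (1 - p) ^ k * p ^ (m - k) ≤ exp (-(2 * ε ^ 2 * m)) := by
  set w : ℕ → ℝ := fun k => (m.choose k : ℝ) * (1 - p) ^ k * p ^ (m - k)
  have hw (k : ℕ) : 0 ≤ w k := by have := sub_nonneg.2 hp1; positivity
  set t := 4 * ε with ht
  calc ∑ k ∈ (range (m + 1)).filter (fun k : ℕ => (k : ℝ) ≤ (1 - p - ε) * m), w k
      ≤ ∑ k ∈ (range (m + 1)).filter (fun k : ℕ => (k : ℝ) ≤ (1 - p - ε) * m),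
          w k * exp (t * ((1 - p - ε) * m - k)) := by
        refine sum_le_sum fun k hk => le_mul_of_one_le_right (hw k) (one_le_exp ?_)
        exact mul_nonneg (by positivity) (sub_nonneg.2 (mem_filter.1 hk).2)
    _ ≤ ∑ k ∈ range (m + 1), w k * exp (t * ((1 - p - ε) * m - k)) :=
        sum_le_sum_of_subset_of_nonneg (filter_subset _ _) fun k _ _ => by positivity
    _ = exp (t * (1 - p - ε) * m) * ((1 - p) * exp (-t) + p) ^ m := by
        rw [← sum_choose_mul_pow_mul_exp, mul_sum]
        refine sum_congr rfl fun k _ => ?_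
        rw [show t * ((1 - p - ε) * m - k) = t * (1 - p - ε) * m + -(t * k) by ring, exp_add]
        ring
    _ ≤ exp (t * (1 - p - ε) * m) * exp (-((1 - p) * t) + t ^ 2 / 8) ^ m := by
        have hbase : 0 ≤ (1 - p) * exp (-t) + p :=
          add_nonneg (mul_nonneg (sub_nonneg.2 hp1) (exp_nonneg _)) hp0
        exact mul_le_mul_of_nonneg_left
          (pow_le_pow_left₀ hbase (one_sub_mul_exp_neg_add_le hp0 hp1 t) m) (exp_nonneg _)
    _ = exp (-(2 * ε ^ 2 * m)) := by
        rw [← exp_nat_mul, ← exp_add, ht]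
        congr 1
        ring

lemma one_sub_exp_le_sum_filter_choose_mul_pow {p : ℝ} (hp0 : 0 ≤ p) (hp1 : p ≤ 1) {m : ℕ}
    {ε : ℝ} (hε : 0 ≤ ε) {P : ℕ → Prop} [DecidablePred P]
    (hP : ∀ k ≤ m, (1 - p - ε) * m < k → P k) :
    1 - exp (-(2 * ε ^ 2 * m))
      ≤ ∑ k ∈ (range (m + 1)).filter P, (m.choose k : ℝ) * (1 - p) ^ k * p ^ (m - k) := by
  have hbad : (range (m + 1)).filter (fun k => ¬P k)
      ⊆ (range (m + 1)).filter (fun k : ℕ => (k : ℝ) ≤ (1 - p - ε) * m) := by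
    intro k hk
    simp only [mem_filter, mem_range] at hk ⊢
    exact ⟨hk.1, not_lt.1 fun hlt => hk.2 (hP k (Nat.lt_succ_iff.1 hk.1) hlt)⟩
  have hsplit := sum_filter_add_sum_filter_not (range (m + 1)) P
    fun k => (m.choose k : ℝ) * (1 - p) ^ k * p ^ (m - k)
  have hq := sub_nonneg.2 hp1
  have := sum_le_sum_of_subset_of_nonneg
    (f := fun k => (m.choose k : ℝ) * (1 - p) ^ k * p ^ (m - k)) hbad fun k _ _ => by positivity
  linarith [sum_choose_mul_pow p m, sum_filter_choose_mul_pow_le hp0 hp1 m hε]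

end Binomial

theorem rad_subsample_concentration_general {X : Type*} [MeasurableSpace X]
    (F : Set (X → ℝ)) (hF : F.Nonempty)
    (C : ℝ) (hbdd : ∀ f ∈ F, ∀ x : X, |f x| ≤ C)
    (D : Measure X) [IsProbabilityMeasure D]
    (hmeas : ∀ k : ℕ, Integrable (empRad F k) (Measure.pi fun _ : Fin k => D))
    (p : ℝ) (hp0 : 0 ≤ p)
    (δ : ℝ) (hδ0 : 0 < δ) (hδ1 : δ < 1) (m : ℕ)
    (hm : 0 < 1 - p - Real.sqrt (Real.log (1 / δ) / (2 * m))) :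
    1 - δ ≤ ∑ k ∈ (Finset.range (m + 1)).filter (fun k : ℕ =>
        Rad F k D ≤ Rad F m D / (1 - p - Real.sqrt (Real.log (1 / δ) / (2 * m)))),
      (m.choose k : ℝ) * (1 - p) ^ k * p ^ (m - k) := by
  set ε := √(log (1 / δ) / (2 * m))
  have hε : 0 ≤ ε := sqrt_nonneg _
  have hp1 : p ≤ 1 := by linarith
  rcases Nat.eq_zero_or_pos m with rfl | hm0
  · have h0 : Rad F 0 D ≤ Rad F 0 D / (1 - p - ε) :=
      le_div_self (Rad_nonneg hF hbdd 0) hm (by linarith)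
    simpa [sum_filter, h0] using hδ0.le
  have hδ : exp (-(2 * ε ^ 2 * m)) = δ := by
    have hlog : 0 ≤ log (1 / δ) := log_nonneg (one_le_one_div hδ0 hδ1.le)
    rw [sq_sqrt (by positivity), one_div, log_inv]
    field_simp
    exact exp_log hδ0
  calc 1 - δ = 1 - exp (-(2 * ε ^ 2 * m)) := by rw [hδ]
    _ ≤ _ := one_sub_exp_le_sum_filter_choose_mul_pow hp0 hp1 hε fun k hkm hk =>
      Rad_le_div_of_mul_le hF hbdd hmeas hm0 hkm hm hk.le

/-- Concentration inequality for the subsample Rademacher complexity.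
If the number `n` of supervised samples among `m` joint samples is distributed
as `Binomial(m, 1-p)` (so `P[n = k] = C(m,k)(1-p)^k p^{m-k}`), then with
probability at least `1 - δ` over `n`,
`R_n(F, D) ≤ R_m(F, D) / (1 - p - √(log(1/δ)/(2m)))`. -/
theorem rad_subsample_concentration {X : Type*} [MeasurableSpace X]
    (F : Set (X → ℝ)) (hF : F.Nonempty)
    (C : ℝ) (hbdd : ∀ f ∈ F, ∀ x : X, |f x| ≤ C)
    (D : Measure X) [IsProbabilityMeasure D]
    (hmeas : ∀ k : ℕ, Integrable (empRad F k) (Measure.pi fun _ : Fin k => D))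
    (p : ℝ) (hp0 : 0 ≤ p) (hp1 : p ≤ 1)
    (δ : ℝ) (hδ0 : 0 < δ) (hδ1 : δ < 1) (m : ℕ)
    (hm : 0 < 1 - p - Real.sqrt (Real.log (1 / δ) / (2 * m))) :
    1 - δ ≤ ∑ k ∈ (Finset.range (m + 1)).filter (fun k : ℕ =>
        Rad F k D ≤ Rad F m D / (1 - p - Real.sqrt (Real.log (1 / δ) / (2 * m)))),
      (m.choose k : ℝ) * (1 - p) ^ k * p ^ (m - k) :=
  rad_subsample_concentration_general F hF C hbdd D hmeas p hp0 δ hδ0 hδ1 m hm
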